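/- Let d ≥ 1, L > 0, and let f : ℝ^d → ℝ be L-smooth and attain its minimum, with sublevel set f⋆(δ) = {x ∈ ℝ^d : f(x) − inf f ≤ δ} bounded for some δ > 0. Let (σ_n)_{n≥1} be a sequence with σ_n ≥ 0 and σ_n → 0. Then for every ε > 0 there exists N ∈ ℕ such that for all n ≥ N, every minimizer x⋆_{σ_n} of f_{σ_n} satisfies dist(x⋆_{σ_n}, f⋆(0)) = inf{‖x⋆_{σ_n} − x⋆‖ : x⋆ ∈ f⋆(0)} < ε. -/

import Mathlib

open MeasureTheory
open scoped Classical

/-- Gaussian smoothing of `f : ℝ^d → ℝ` with radius `σ`: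
`f_σ(x) = π^(−d/2) ∫ f(x + σu) e^(−‖u‖²) du`, with `f_0 = f`. -/
noncomputable def gsmooth {d : ℕ} (f : EuclideanSpace ℝ (Fin d) → ℝ) (σ : ℝ)
    (x : EuclideanSpace ℝ (Fin d)) : ℝ :=
  if σ = 0 then f x
  else Real.pi ^ (-(d : ℝ) / 2) *
    ∫ u : EuclideanSpace ℝ (Fin d), f (x + σ • u) * Real.exp (-‖u‖ ^ 2)

/-!
For an `L`-smooth `f` the first-order Taylor remainder `f y - f x - ⟪∇f x, y - x⟫` is at most
`L ‖y - x‖²`. Averaged against the Gaussian weight the linear term vanishes by symmetry, so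
`|f_σ - f| ≤ L M σ²` uniformly, `M` being the second moment of the normalized weight. A minimizer of
`f_σ` is therefore a `2 L M σ²`-minimizer of `f`, and because a sublevel set of `f` is bounded
(hence compact), approximate minimizers of `f` are uniformly close to its set of minimizers.
-/

open Real

theorem one_add_mul_exp_neg_le (t : ℝ) : (1 + t) * exp (-t) ≤ 2 * exp (-(1 / 2) * t) := by
  have h : 1 + t ≤ 2 * exp (t / 2) := by linarith [add_one_le_exp (t / 2)]
  calc (1 + t) * exp (-t) ≤ 2 * exp (t / 2) * exp (-t) := by gcongr
    _ = 2 * exp (-(1 / 2) * t) := by rw [mul_assoc, ← exp_add]; ring_nf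

section Gaussian

variable {V : Type*} [NormedAddCommGroup V] [InnerProductSpace ℝ V] [FiniteDimensional ℝ V]
  [MeasurableSpace V] [BorelSpace V]

theorem integrable_exp_neg_mul_norm_sq {b : ℝ} (hb : 0 < b) :
    Integrable (fun v : V => exp (-b * ‖v‖ ^ 2)) := by
  refine (GaussianFourier.integrable_cexp_neg_mul_sq_norm_add (V := V)
    (b := (b : ℂ)) (by simpa using hb) 0 0).norm.congr (.of_forall fun v => ?_)
  simp only [zero_mul, add_zero, Complex.norm_exp, ← Complex.ofReal_pow, ← Complex.ofReal_mul,
    ← Complex.ofReal_neg, Complex.ofReal_re]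

theorem integrable_mul_exp_neg_norm_sq_of_abs_le {g : V → ℝ} (hg : Continuous g) {C : ℝ}
    (hC : ∀ v, |g v| ≤ C * (1 + ‖v‖ ^ 2)) :
    Integrable (fun v => g v * exp (-‖v‖ ^ 2)) := by
  refine ((integrable_exp_neg_mul_norm_sq (V := V) (b := 1 / 2) (by norm_num)).const_mul
    (2 * C)).mono' (by fun_prop) (.of_forall fun v => ?_)
  have hC0 : 0 ≤ C := by nlinarith [abs_nonneg (g v), hC v, sq_nonneg ‖v‖]
  calc ‖g v * exp (-‖v‖ ^ 2)‖ = |g v| * exp (-‖v‖ ^ 2) := by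
        rw [Real.norm_eq_abs, abs_mul, abs_exp]
    _ ≤ C * ((1 + ‖v‖ ^ 2) * exp (-‖v‖ ^ 2)) := by
        rw [← mul_assoc]; gcongr; exact hC v
    _ ≤ C * (2 * exp (-(1 / 2) * ‖v‖ ^ 2)) := by gcongr ?_ * ?_; exact one_add_mul_exp_neg_le _
    _ = 2 * C * exp (-(1 / 2) * ‖v‖ ^ 2) := by ring

theorem integral_exp_neg_norm_sq :
    ∫ v : V, exp (-‖v‖ ^ 2) = π ^ ((Module.finrank ℝ V : ℝ) / 2) := by
  simpa using GaussianFourier.integral_rexp_neg_mul_sq_norm (V := V) one_pos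

theorem integral_inner_mul_exp_neg_norm_sq (w : V) :
    ∫ v, inner ℝ w v * exp (-‖v‖ ^ 2) = 0 := by
  have h := integral_neg_eq_self (fun v : V => inner ℝ w v * exp (-‖v‖ ^ 2)) volume
  simp only [inner_neg_right, norm_neg, neg_mul, integral_neg] at h
  linarith

variable {r : V → ℝ} {K : ℝ}

theorem integrable_mul_exp_neg_norm_sq_of_abs_le_mul_norm_sq (hr : Continuous r)
    (hrK : ∀ v, |r v| ≤ K * ‖v‖ ^ 2) : Integrable fun v => r v * exp (-‖v‖ ^ 2) :=
  integrable_mul_exp_neg_norm_sq_of_abs_le hr (C := |K|) fun v => (hrK v).trans (by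
    nlinarith [le_abs_self K, abs_nonneg K, sq_nonneg ‖v‖])

theorem integral_add_inner_add_mul_exp_neg_norm_sq (c : ℝ) (w : V) (hr : Continuous r)
    (hrK : ∀ v, |r v| ≤ K * ‖v‖ ^ 2) :
    ∫ v, (c + inner ℝ w v + r v) * exp (-‖v‖ ^ 2)
      = c * π ^ ((Module.finrank ℝ V : ℝ) / 2) + ∫ v, r v * exp (-‖v‖ ^ 2) := by
  have hconst : Integrable fun v : V => c * exp (-‖v‖ ^ 2) := by
    simpa using (integrable_exp_neg_mul_norm_sq (V := V) one_pos).const_mul c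
  have hinner : Integrable fun v => inner ℝ w v * exp (-‖v‖ ^ 2) :=
    integrable_mul_exp_neg_norm_sq_of_abs_le (by fun_prop) (C := ‖w‖) fun v =>
      (abs_real_inner_le_norm w v).trans (by gcongr; nlinarith [sq_nonneg (‖v‖ - 1)])
  simp_rw [add_mul]
  rw [integral_add (by exact hconst.add hinner)
      (integrable_mul_exp_neg_norm_sq_of_abs_le_mul_norm_sq hr hrK),
    integral_add hconst hinner, integral_const_mul, integral_exp_neg_norm_sq,
    integral_inner_mul_exp_neg_norm_sq, add_zero]

theorem abs_integral_mul_exp_neg_norm_sq_le (hr : Continuous r)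
    (hrK : ∀ v, |r v| ≤ K * ‖v‖ ^ 2) :
    |∫ v, r v * exp (-‖v‖ ^ 2)| ≤ K * ∫ v : V, ‖v‖ ^ 2 * exp (-‖v‖ ^ 2) := by
  have hmoment : Integrable fun v : V => ‖v‖ ^ 2 * exp (-‖v‖ ^ 2) :=
    integrable_mul_exp_neg_norm_sq_of_abs_le (by fun_prop) (C := 1) fun v => by simp
  rw [← integral_const_mul]
  refine abs_integral_le_integral_abs.trans (integral_mono ?_ (hmoment.const_mul _) fun v => ?_)
  · exact (integrable_mul_exp_neg_norm_sq_of_abs_le_mul_norm_sq hr hrK).abs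
  · rw [abs_mul, abs_exp, ← mul_assoc]
    gcongr
    exact hrK v

end Gaussian

theorem abs_sub_sub_inner_gradient_le {V : Type*} [NormedAddCommGroup V] [InnerProductSpace ℝ V]
    [CompleteSpace V] {f : V → ℝ} {L : ℝ} (hL : 0 ≤ L) (hf : Differentiable ℝ f)
    (hgrad : ∀ x y, ‖gradient f x - gradient f y‖ ≤ L * ‖x - y‖) (a b : V) :
    |f b - f a - inner ℝ (gradient f a) (b - a)| ≤ L * ‖b - a‖ ^ 2 := by
  have hfderiv : ∀ z, fderiv ℝ f z = InnerProductSpace.toDual ℝ V (gradient f z) := fun z => by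
    rw [gradient, LinearIsometryEquiv.apply_symm_apply]
  have hseg : ∀ z ∈ segment ℝ a b, ‖fderiv ℝ f z - fderiv ℝ f a‖ ≤ L * ‖b - a‖ := by
    rintro z ⟨s, t, hs, ht, hst, rfl⟩
    have hz : s • a + t • b - a = t • (b - a) := by
      rw [eq_sub_of_add_eq hst]; module
    rw [hfderiv, hfderiv, ← map_sub, LinearIsometryEquiv.norm_map]
    refine (hgrad _ a).trans (mul_le_mul_of_nonneg_left ?_ hL)
    rw [hz, norm_smul, Real.norm_of_nonneg ht]
    exact mul_le_of_le_one_left (norm_nonneg _) (by linarith)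
  have h := Convex.norm_image_sub_le_of_norm_fderiv_le' (fun z _ => hf z) hseg
    (convex_segment a b) (left_mem_segment ℝ a b) (right_mem_segment ℝ a b)
  rw [hfderiv, InnerProductSpace.toDual_apply_apply, Real.norm_eq_abs] at h
  linarith

section Smoothing

variable {d : ℕ}

local notation "E" => EuclideanSpace ℝ (Fin d)

noncomputable def gaussianSecondMoment (d : ℕ) : ℝ :=
  π ^ (-(d : ℝ) / 2) * ∫ u : EuclideanSpace ℝ (Fin d), ‖u‖ ^ 2 * exp (-‖u‖ ^ 2)

theorem abs_gsmooth_sub_le {f : E → ℝ} {L : ℝ} (hL : 0 ≤ L) (hf : Differentiable ℝ f)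
    (hgrad : ∀ x y, ‖gradient f x - gradient f y‖ ≤ L * ‖x - y‖) (σ : ℝ) (x : E) :
    |gsmooth f σ x - f x| ≤ L * gaussianSecondMoment d * σ ^ 2 := by
  rcases eq_or_ne σ 0 with rfl | hσ
  · simp [gsmooth]
  set R : E → ℝ := fun u => f (x + σ • u) - f x - inner ℝ (σ • gradient f x) u
  have hR : ∀ u, |R u| ≤ L * σ ^ 2 * ‖u‖ ^ 2 := fun u => by
    have h := abs_sub_sub_inner_gradient_le hL hf hgrad x (x + σ • u)
    rwa [add_sub_cancel_left, inner_smul_right, ← real_inner_smul_left, norm_smul, mul_pow,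
      Real.norm_eq_abs, sq_abs, ← mul_assoc] at h
  have hRc : Continuous R := by have := hf.continuous; fun_prop
  have hsplit : ∀ u, f (x + σ • u) = f x + inner ℝ (σ • gradient f x) u + R u := fun u => by
    ring
  have hnorm : π ^ (-(d : ℝ) / 2) * π ^ ((d : ℝ) / 2) = 1 := by
    rw [← rpow_add pi_pos, neg_div, neg_add_cancel, rpow_zero]
  have heq : gsmooth f σ x - f x = π ^ (-(d : ℝ) / 2) * ∫ u, R u * exp (-‖u‖ ^ 2) := by
    rw [gsmooth, if_neg hσ]
    simp_rw [hsplit]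
    rw [integral_add_inner_add_mul_exp_neg_norm_sq _ _ hRc hR, finrank_euclideanSpace_fin]
    linear_combination f x * hnorm
  rw [heq, abs_mul, abs_of_pos (rpow_pos_of_pos pi_pos _), gaussianSecondMoment]
  calc π ^ (-(d : ℝ) / 2) * |∫ u, R u * exp (-‖u‖ ^ 2)|
      ≤ π ^ (-(d : ℝ) / 2) * (L * σ ^ 2 * ∫ u : E, ‖u‖ ^ 2 * exp (-‖u‖ ^ 2)) := by
        gcongr; exact abs_integral_mul_exp_neg_norm_sq_le hRc hR
    _ = _ := by ring

end Smoothing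

theorem exists_pos_infDist_minimizers_lt {X : Type*} [MetricSpace X] [ProperSpace X]
    {f : X → ℝ} (hf : Continuous f) {x₀ : X} (hmin : ∀ y, f x₀ ≤ f y) {δ : ℝ} (hδ : 0 < δ)
    (hbdd : Bornology.IsBounded {x | f x - f x₀ ≤ δ}) {ε : ℝ} (hε : 0 < ε) :
    ∃ η > 0, ∀ x, f x - f x₀ ≤ η → Metric.infDist x {x | ∀ y, f x ≤ f y} < ε := by
  set K := {x | f x - f x₀ ≤ δ} ∩ {x | ε ≤ Metric.infDist x {x | ∀ y, f x ≤ f y}}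
  have hK : IsCompact K := Metric.isCompact_of_isClosed_isBounded
    ((isClosed_le (by fun_prop) continuous_const).inter
      (isClosed_le continuous_const (Metric.continuous_infDist_pt _)))
    (hbdd.subset Set.inter_subset_left)
  have hpos : ∀ x ∈ K, f x₀ < f x := fun x hx => by
    refine (hmin x).lt_of_ne fun hx₀ => ?_
    have hxmin : x ∈ {x | ∀ y, f x ≤ f y} := fun y => hx₀ ▸ hmin y
    have hfar : ε ≤ Metric.infDist x {x | ∀ y, f x ≤ f y} := hx.2
    linarith [Metric.infDist_zero_of_mem hxmin]
  obtain ⟨a, ha, haK⟩ := hK.exists_forall_le' hf.continuousOn hpos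
  refine ⟨min δ ((a - f x₀) / 2), by positivity, fun x hx => ?_⟩
  by_contra! hfar
  have hax := haK x ⟨hx.trans (min_le_left _ _), hfar⟩
  linarith [hx.trans (min_le_right _ _)]

theorem gsmooth_minimizers_converge_general {d : ℕ} {L δ : ℝ} (hL : 0 < L) (hδ : 0 < δ)
    (f : EuclideanSpace ℝ (Fin d) → ℝ)
    (hdiff : Differentiable ℝ f)
    (hgrad : ∀ x y, ‖gradient f x - gradient f y‖ ≤ L * ‖x - y‖)
    (xstar : EuclideanSpace ℝ (Fin d)) (hmin : ∀ y, f xstar ≤ f y)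
    (hbound : Bornology.IsBounded {x : EuclideanSpace ℝ (Fin d) | f x - f xstar ≤ δ})
    (σ : ℕ → ℝ)
    (hto : Filter.Tendsto σ Filter.atTop (nhds 0)) :
    ∀ ε : ℝ, 0 < ε → ∃ N : ℕ, ∀ n, N ≤ n → ∀ xsig : EuclideanSpace ℝ (Fin d),
      (∀ x, gsmooth f (σ n) xsig ≤ gsmooth f (σ n) x) →
      Metric.infDist xsig {x : EuclideanSpace ℝ (Fin d) | ∀ y, f x ≤ f y} < ε := by
  intro ε hε
  obtain ⟨η, hη, hnear⟩ :=
    exists_pos_infDist_minimizers_lt hdiff.continuous hmin hδ hbound hε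
  have hgap : Filter.Tendsto (fun n => 2 * (L * gaussianSecondMoment d) * σ n ^ 2)
      Filter.atTop (nhds 0) := by
    simpa using (hto.pow 2).const_mul (2 * (L * gaussianSecondMoment d))
  obtain ⟨N, hN⟩ := Filter.eventually_atTop.mp (hgap.eventually_lt_const hη)
  refine ⟨N, fun n hn xsig hxsig => hnear xsig ?_⟩
  have hsig := abs_le.mp (abs_gsmooth_sub_le hL.le hdiff hgrad (σ n) xsig)
  have hstar := abs_le.mp (abs_gsmooth_sub_le hL.le hdiff hgrad (σ n) xstar)
  linarith [hxsig xstar, hN n hn]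

/-- If `f⋆(δ)` is bounded for some `δ > 0` and `σ_n → 0`, then minimizers of
`f_{σ_n}` get arbitrarily close to the minimizer set `f⋆(0)` of `f`. -/
theorem gsmooth_minimizers_converge {d : ℕ} (hd : 1 ≤ d) {L δ : ℝ} (hL : 0 < L) (hδ : 0 < δ)
    (f : EuclideanSpace ℝ (Fin d) → ℝ)
    (hdiff : Differentiable ℝ f)
    (hgrad : ∀ x y, ‖gradient f x - gradient f y‖ ≤ L * ‖x - y‖)
    (xstar : EuclideanSpace ℝ (Fin d)) (hmin : ∀ y, f xstar ≤ f y)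
    (hbound : Bornology.IsBounded {x : EuclideanSpace ℝ (Fin d) | f x - f xstar ≤ δ})
    (σ : ℕ → ℝ) (hσ : ∀ n, 0 ≤ σ n)
    (hto : Filter.Tendsto σ Filter.atTop (nhds 0)) :
    ∀ ε : ℝ, 0 < ε → ∃ N : ℕ, ∀ n, N ≤ n → ∀ xsig : EuclideanSpace ℝ (Fin d),
      (∀ x, gsmooth f (σ n) xsig ≤ gsmooth f (σ n) x) →
      Metric.infDist xsig {x : EuclideanSpace ℝ (Fin d) | ∀ y, f x ≤ f y} < ε :=
  gsmooth_minimizers_converge_general hL hδ f hdiff hgrad xstar hmin hbound σ hto
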